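/- Let X be a nonempty finite set, let H_cost : X → ℝ be an objective function, and let T : X → ℕ be a penalty (constraint-violation) function whose feasible set F = {x ∈ X : T(x) = 0} is nonempty. Then for every real λ > max_{x∈X} H_cost(x) − min_{x∈X} H_cost(x), the minimizers over X of the penalized objective H(x) = H_cost(x) + λ·T(x) are exactly the minimizers of H_cost over the feasible set F. -/

import Mathlib

/-! Because `T` is integer-valued, an infeasible point pays a penalty of at least `λ`, which exceeds
the spread of `Hcost`; so every infeasible point is strictly worse than every feasible one, while on
feasible points the penalized objective is `Hcost` itself. -/

theorem Finset.sub_le_sup'_sub_inf' {ι β : Type*} [AddCommGroup β] [LinearOrder β]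
    [IsOrderedAddMonoid β] {s : Finset ι} (hs : s.Nonempty) (f : ι → β) {i j : ι}
    (hi : i ∈ s) (hj : j ∈ s) : f i - f j ≤ s.sup' hs f - s.inf' hs f :=
  sub_le_sub (s.le_sup' f hi) (s.inf'_le f hj)

theorem forall_le_iff_of_lt_of_not {X α : Type*} [LinearOrder α] (h f : X → α) (p : X → Prop)
    (hp : ∃ x, p x) (heq : ∀ x, p x → h x = f x) (hlt : ∀ x y, p x → ¬ p y → h x < h y)
    (x : X) : (∀ y, h x ≤ h y) ↔ p x ∧ ∀ y, p y → f x ≤ f y := by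
  constructor
  · intro hmin
    have hx : p x := by
      by_contra hx
      obtain ⟨z, hz⟩ := hp
      exact (hlt z x hz hx).not_ge (hmin z)
    refine ⟨hx, fun y hy => ?_⟩
    rw [← heq x hx, ← heq y hy]
    exact hmin y
  · rintro ⟨hx, hxmin⟩ y
    by_cases hy : p y
    · rw [heq x hx, heq y hy]
      exact hxmin y hy
    · exact (hlt x y hx hy).le

theorem add_mul_penalty_lt_of_spread_lt {X : Type*} (f : X → ℝ) (T : X → ℕ) {lam : ℝ}
    (hlam : ∀ x y, f x - f y < lam) {x y : X} (hx : T x = 0) (hy : T y ≠ 0) :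
    f x + lam * T x < f y + lam * T y := by
  have hlam_pos : 0 < lam := by simpa using hlam x x
  have hTy : (1 : ℝ) ≤ T y := by exact_mod_cast Nat.one_le_iff_ne_zero.mpr hy
  calc f x + lam * T x = f x := by simp [hx]
    _ < f y + lam := by linarith [hlam x y]
    _ ≤ f y + lam * T y := by gcongr; exact le_mul_of_one_le_right hlam_pos.le hTy

/-- Exact penalty: for a finite nonempty search space `X`, an objective
`Hcost : X → ℝ` and a nonnegative-integer penalty `T : X → ℕ` whose feasible
set `{x | T x = 0}` is nonempty, any penalty weight `λ` exceeding the spread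
`max Hcost - min Hcost` makes the minimizers of `Hcost + λ·T` over `X`
exactly the minimizers of `Hcost` over the feasible set. -/
theorem exact_penalty_minimizers
    (X : Type*) [Fintype X] [Nonempty X]
    (Hcost : X → ℝ) (T : X → ℕ)
    (hF : ∃ x : X, T x = 0)
    (lam : ℝ)
    (hlam : Finset.univ.sup' Finset.univ_nonempty Hcost
              - Finset.univ.inf' Finset.univ_nonempty Hcost < lam) :
    ∀ x : X,
      (∀ y : X, Hcost x + lam * (T x : ℝ) ≤ Hcost y + lam * (T y : ℝ))
        ↔ (T x = 0 ∧ ∀ y : X, T y = 0 → Hcost x ≤ Hcost y) := by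
  have hspread : ∀ x y, Hcost x - Hcost y < lam := fun x y =>
    (Finset.sub_le_sup'_sub_inf' _ Hcost (Finset.mem_univ x) (Finset.mem_univ y)).trans_lt hlam
  exact forall_le_iff_of_lt_of_not (fun x => Hcost x + lam * T x) Hcost (fun x => T x = 0) hF
    (fun x hx => by simp [hx])
    (fun _ _ hx hy => add_mul_penalty_lt_of_spread_lt Hcost T hspread hx hy)
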